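/- Löb induction is valid in the internal logic of the topos of trees: for any proposition φ (a subobject of any object X), if ▷φ ⇒ φ holds at every stage, then φ holds at every stage. Equivalently, the internal formula (▷φ ⇒ φ) ⇒ φ is valid. -/

import Mathlib

/-- An object of the topos of trees `S`. -/
structure Obj where
  X : ℕ → Type
  r : ∀ i, X (i + 1) → X i

/-- A subobject of `X`: a family of subsets closed under restriction. -/
def ClosedSub (X : Obj) (S : ∀ i, Set (X.X i)) : Prop :=
  ∀ i a, a ∈ S (i + 1) → X.r i a ∈ S i

/-- The later modality `▷` on subobjects: `▷φ` holds everywhere at the first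
stage, and at stage `i+1` it holds of `a` iff `φ` holds of the restriction of `a`
at stage `i`. -/
def laterSub (X : Obj) (S : ∀ i, Set (X.X i)) : ∀ i, Set (X.X i) := fun i =>
  match i with
  | 0 => Set.univ
  | i + 1 => { a | X.r i a ∈ S i }

theorem loeb_induction_general (X : Obj) (S : ∀ i, Set (X.X i))
    (h : ∀ i a, a ∈ laterSub X S i → a ∈ S i) :
    ∀ i a, a ∈ S i := by
  intro i
  induction i with
  | zero => exact fun a => h 0 a trivial
  | succ n ih => exact fun a => h (n + 1) a (ih (X.r n a))

/-- Löb induction is valid in the internal logic of the topos of trees: for any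
proposition `φ` (a subobject `S` of any object `X`), if `▷φ ⇒ φ` holds at every
stage, then `φ` holds at every stage. -/
theorem loeb_induction (X : Obj) (S : ∀ i, Set (X.X i)) (hS : ClosedSub X S)
    (h : ∀ i a, a ∈ laterSub X S i → a ∈ S i) :
    ∀ i a, a ∈ S i :=
  loeb_induction_general X S h
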